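/- arXiv:0801.2794 — 3 statements merged into one kernel-verified Lean document; each statement's English description precedes it below -/
import Mathlib

section
/- Let V be a finite-dimensional real quadratic space with quadratic form Q. The Clifford algebra of V with the orthogonal direct sum of Q and the positive-definite form on ℝ (i.e. C(V ⊕ ℝ, Q ⊥ ⟨1⟩)), where the generator t of the ℝ-factor satisfies t² = 1, admits an algebra map determined by sending (v, s·t) to v·t + s·t, and this induces an isomorphism of Clifford algebras C(V ⊕ ℝ, Q ⊥ ⟨1⟩) ≅ C(V⁻ ⊕ ℝ, (−Q) ⊥ ⟨1⟩), where V⁻ denotes V with the negated quadratic form. -/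
open CliffordAlgebra


variable {V : Type} [AddCommGroup V] [Module ℝ V]

noncomputable def auxHom (Q Q' : QuadraticForm ℝ V) (h : Q' = -Q) :
    CliffordAlgebra (Q.prod (QuadraticMap.sq (R := ℝ))) →ₐ[ℝ]
      CliffordAlgebra (Q'.prod (QuadraticMap.sq (R := ℝ))) := by
  refine CliffordAlgebra.lift _ ⟨
    (LinearMap.mulRight ℝ (ι (Q'.prod QuadraticMap.sq) (0, 1)) ∘ₗ
        (ι (Q'.prod QuadraticMap.sq)) ∘ₗ LinearMap.inl ℝ V ℝ) ∘ₗ LinearMap.fst ℝ V ℝ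
      + LinearMap.toSpanSingleton ℝ _ (ι (Q'.prod QuadraticMap.sq) (0, 1)) ∘ₗ
          LinearMap.snd ℝ V ℝ, ?_⟩
  rintro ⟨v, s⟩
  set e := ι (Q'.prod QuadraticMap.sq) (0, 1) with he
  set u := ι (Q'.prod QuadraticMap.sq) (v, 0) with hu
  simp only [LinearMap.add_apply, LinearMap.comp_apply, LinearMap.fst_apply,
    LinearMap.snd_apply, LinearMap.inl_apply, LinearMap.mulRight_apply,
    LinearMap.toSpanSingleton_apply, ← he, ← hu]
  have hee : e * e = algebraMap ℝ _ 1 := by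
    rw [he, ι_sq_scalar]; norm_num
  have huu : u * u = algebraMap ℝ _ (Q' v) := by
    rw [hu, ι_sq_scalar]; congr 1; simp
  have hanti : e * u = -(u * e) := by
    have := ι_mul_ι_add_swap (Q := Q'.prod QuadraticMap.sq) (v, 0) (0, 1)
    rw [← he, ← hu] at this
    have hp : QuadraticMap.polar (⇑(Q'.prod QuadraticMap.sq)) (v, 0) (0, 1) = 0 := by
      simp [QuadraticMap.polar]
    rw [hp, map_zero] at this
    exact eq_neg_of_add_eq_zero_right this
  have : (u * e + s • e) * (u * e + s • e)
      = u * e * (u * e) + s • (u * (e * e)) + s • (e * u * e) + (s * s) • (e * e) := by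
    simp only [mul_add, add_mul, smul_mul_assoc, mul_smul_comm, smul_smul, smul_add, mul_assoc]
    abel
  rw [this]
  have h1 : u * e * (u * e) = algebraMap ℝ _ (Q v) := by
    calc u * e * (u * e) = u * (e * u) * e := by noncomm_ring
    _ = -(u * u * (e * e)) := by rw [hanti]; noncomm_ring
    _ = algebraMap ℝ _ (Q v) := by
        rw [huu, hee, ← map_mul, ← map_neg, h]; norm_num
  have h2 : e * u * e = -(u * (e * e)) := by rw [hanti]; noncomm_ring
  rw [h1, h2, hee, map_one, mul_one]
  rw [smul_neg, add_neg_cancel_right]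
  simp [Algebra.algebraMap_eq_smul_one, add_smul, QuadraticMap.sq_apply]


theorem auxHom_ι (Q Q' : QuadraticForm ℝ V) (h : Q' = -Q) (v : V) (s : ℝ) :
    auxHom Q Q' h (ι (Q.prod QuadraticMap.sq) (v, s)) =
      ι (Q'.prod QuadraticMap.sq) (v, 0) * ι (Q'.prod QuadraticMap.sq) (0, 1)
        + s • ι (Q'.prod QuadraticMap.sq) (0, 1) := by
  rw [auxHom, CliffordAlgebra.lift_ι_apply]
  simp

theorem auxHom_comp (Q Q' : QuadraticForm ℝ V) (h : Q' = -Q) (h' : Q = -Q') :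
    (auxHom Q' Q h').comp (auxHom Q Q' h) = AlgHom.id ℝ _ := by
  apply CliffordAlgebra.hom_ext
  apply LinearMap.ext
  rintro ⟨v, s⟩
  have h00 : ι (Q.prod (QuadraticMap.sq (R := ℝ))) ((0 : V), (0 : ℝ)) = 0 := by
    rw [show ((0 : V), (0 : ℝ)) = (0 : V × ℝ) from rfl, map_zero]
  have hsm : ∀ t : ℝ, ι (Q.prod (QuadraticMap.sq (R := ℝ))) ((0 : V), t)
      = t • ι (Q.prod QuadraticMap.sq) (0, 1) := by
    intro t
    rw [show ((0 : V), t) = t • ((0 : V), (1 : ℝ)) by simp, map_smul]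
  simp only [LinearMap.comp_apply, AlgHom.comp_toLinearMap, AlgHom.toLinearMap_apply,
    AlgHom.id_apply, AlgHom.coe_id, id_eq]
  rw [auxHom_ι Q Q' h v s, map_add, map_mul, map_smul, auxHom_ι Q' Q h' v 0,
    auxHom_ι Q' Q h' 0 1, h00]
  simp only [zero_smul, add_zero, one_smul, zero_mul, zero_add, mul_assoc,
    ι_sq_scalar]
  have : (Q.prod (QuadraticMap.sq (R := ℝ))) ((0 : V), (1 : ℝ)) = 1 := by simp
  rw [this, map_one, mul_one,
    show (v, s) = ((v, 0) : V × ℝ) + (0, s) by simp, map_add, hsm s]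

noncomputable def auxEquiv (Q : QuadraticForm ℝ V) :
    CliffordAlgebra (Q.prod (QuadraticMap.sq (R := ℝ))) ≃ₐ[ℝ]
      CliffordAlgebra ((-Q).prod (QuadraticMap.sq (R := ℝ))) :=
  AlgEquiv.ofAlgHom (auxHom Q (-Q) rfl) (auxHom (-Q) Q (neg_neg Q).symm)
    (auxHom_comp (-Q) Q (neg_neg Q).symm rfl)
    (auxHom_comp Q (-Q) rfl (neg_neg Q).symm)

/-- For a real quadratic space `(V, Q)`, there is an algebra isomorphism
`C(V ⊕ ℝ, Q ⊥ ⟨1⟩) ≅ C(V⁻ ⊕ ℝ, (−Q) ⊥ ⟨1⟩)` determined by sending the generator `(v, s)`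
to `ι (v,0) * ι (0,1) + ι (0,s)`. -/
theorem stmt0 (V : Type) [AddCommGroup V] [Module ℝ V] (Q : QuadraticForm ℝ V) :
    ∃ f : CliffordAlgebra (Q.prod (QuadraticMap.sq (R := ℝ))) ≃ₐ[ℝ]
        CliffordAlgebra ((-Q).prod (QuadraticMap.sq (R := ℝ))),
      ∀ (v : V) (s : ℝ),
        f (ι (Q.prod QuadraticMap.sq) (v, s)) =
          ι ((-Q).prod QuadraticMap.sq) (v, 0) * ι ((-Q).prod QuadraticMap.sq) (0, 1)
            + ι ((-Q).prod QuadraticMap.sq) (0, s) := by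
  refine ⟨auxEquiv Q, fun v s => ?_⟩
  have : auxEquiv Q (ι (Q.prod QuadraticMap.sq) (v, s))
      = auxHom Q (-Q) rfl (ι (Q.prod QuadraticMap.sq) (v, s)) := rfl
  rw [this, auxHom_ι]
  congr 1
  rw [show ((0 : V), s) = s • ((0 : V), (1 : ℝ)) by simp, map_smul]
end

section
/- Let V be a 4k-dimensional real inner product space and (W, Q') any finite-dimensional real quadratic space. Then the map of the previous statement induces an algebra isomorphism from the Clifford algebra C(V ⊕ W, Q ⊥ Q') to the ordinary (ungraded) tensor product C(V) ⊗ C(W). -/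
open CliffordAlgebra
open scoped TensorProduct

/-!
Let `ε = ι e₁ ⋯ ι eₙ`. Moving each `ι eᵢ` past the others gives `ε² = (-1)^(n choose 2) = 1` for
`4 ∣ n`, and `ι v ε = -ε ι v` for `n` even; moreover `ε` is even. The first two facts make
`(v, w) ↦ ι v ⊗ 1 + ε ⊗ ι w` square to `Q v + Q' w`, so it lifts to `C(V × W) → C(V) ⊗ C(W)`.
Conversely, with `ε'` the image of `ε` in `C(V × W)`, the maps `ι v ↦ ι (v, 0)` and
`ι w ↦ ε' ι (0, w)` have commuting images (`ε'` anticommutes with `ι (v, 0)` and, being even,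
commutes with `ι (0, w)`), so they define the inverse on `C(V) ⊗ C(W)`.
-/

theorem Algebra.TensorProduct.tmul_one_add_tmul_mul_self {R A B : Type*} [CommSemiring R]
    [Ring A] [Ring B] [Algebra R A] [Algebra R B] {a c : A} (h : a * c = -(c * a)) (b : B) :
    (a ⊗ₜ[R] (1 : B) + c ⊗ₜ b) * (a ⊗ₜ 1 + c ⊗ₜ b) = (a * a) ⊗ₜ 1 + (c * c) ⊗ₜ (b * b) := by
  simp only [add_mul, mul_add, Algebra.TensorProduct.tmul_mul_tmul, one_mul, mul_one, h,
    TensorProduct.neg_tmul]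
  abel

namespace CliffordAlgebra

section ListProd

variable {R M : Type*} [CommRing R] [AddCommGroup M] [Module R M] {Q : QuadraticForm R M}

theorem ι_mul_prod_map_ι_of_forall_isOrtho {v : M} {l : List M} (h : ∀ x ∈ l, Q.IsOrtho v x) :
    ι Q v * (l.map (ι Q)).prod = (-1 : R) ^ l.length • ((l.map (ι Q)).prod * ι Q v) := by
  induction l with
  | nil => simp
  | cons x t ih =>
    rw [List.map_cons, List.prod_cons, ← mul_assoc, ι_mul_ι_comm_of_isOrtho (h x (by simp)),
      neg_mul, mul_assoc, ih fun y hy => h y (by simp [hy]), List.length_cons, pow_succ,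
      mul_neg_one, neg_smul, mul_smul_comm, mul_assoc]

theorem ι_mul_prod_map_ι_of_mem {v : M} {l : List M} (hl : l.Pairwise Q.IsOrtho) (hv : v ∈ l) :
    ι Q v * (l.map (ι Q)).prod = (-1 : R) ^ (l.length - 1) • ((l.map (ι Q)).prod * ι Q v) := by
  induction l with
  | nil => simp at hv
  | cons x t ih =>
    rw [List.pairwise_cons] at hl
    rw [List.map_cons, List.prod_cons, List.length_cons, Nat.add_sub_cancel]
    obtain rfl | hvt := List.mem_cons.mp hv
    · conv_lhs => rw [ι_mul_prod_map_ι_of_forall_isOrtho hl.1]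
      rw [mul_smul_comm, mul_assoc]
    · obtain ⟨k, hk⟩ : ∃ k, t.length = k + 1 :=
        Nat.exists_eq_add_one_of_ne_zero (List.length_pos_of_mem hvt).ne'
      rw [← mul_assoc, ι_mul_ι_comm_of_isOrtho (hl.1 v hvt).symm, neg_mul, mul_assoc,
        ih hl.2 hvt, hk, Nat.add_sub_cancel, pow_succ, mul_neg_one, neg_smul, mul_smul_comm,
        mul_assoc]

theorem prod_map_ι_mul_self {l : List M} (hl : l.Pairwise Q.IsOrtho) :
    (l.map (ι Q)).prod * (l.map (ι Q)).prod =
      (-1 : R) ^ l.length.choose 2 • algebraMap R _ (l.map Q).prod := by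
  induction l with
  | nil => simp
  | cons x t ih =>
    rw [List.pairwise_cons] at hl
    set P := (t.map (ι Q)).prod
    calc ι Q x * P * (ι Q x * P) = (-1 : R) ^ t.length • (P * (ι Q x * ι Q x) * P) := by
          nth_rw 1 [ι_mul_prod_map_ι_of_forall_isOrtho hl.1]
          rw [smul_mul_assoc, mul_assoc, mul_assoc, mul_assoc]
      _ = ((-1 : R) ^ t.length * Q x) • (P * P) := by
          rw [ι_sq_scalar, ← Algebra.commutes, mul_assoc, Algebra.algebraMap_eq_smul_one,
            smul_mul_assoc, one_mul, smul_smul]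
      _ = _ := by
          rw [ih hl.2, smul_smul, List.map_cons, List.prod_cons, map_mul,
            Algebra.algebraMap_eq_smul_one (Q x), smul_mul_assoc, one_mul, smul_smul,
            List.length_cons, Nat.choose_succ_succ, Nat.choose_one_right, pow_add]
          ring_nf

end ListProd

section VolumeElement

variable {R M : Type*} [CommRing R] [AddCommGroup M] [Module R M] {n : ℕ}

variable (Q : QuadraticForm R M) in
def volumeElement (e : Fin n → M) : CliffordAlgebra Q :=
  (List.ofFn fun i => ι Q (e i)).prod

variable {Q : QuadraticForm R M} {e : Fin n → M}

theorem volumeElement_eq_prod_map : volumeElement Q e = ((List.ofFn e).map (ι Q)).prod := by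
  rw [volumeElement, List.map_ofFn]
  rfl

theorem volumeElement_mem_evenOdd_zero (hn : Even n) : volumeElement Q e ∈ evenOdd Q 0 := by
  simpa [volumeElement, ZMod.natCast_eq_zero_iff_even.mpr hn] using
    SetLike.list_prod_ofFn_mem_graded (fun _ => 1) _ fun i => ι_mem_evenOdd_one Q (e i)

theorem volumeElement_mul_self (he : Pairwise fun i j => Q.IsOrtho (e i) (e j))
    (hunit : ∀ i, Q (e i) = 1) (hn : 4 ∣ n) : volumeElement Q e * volumeElement Q e = 1 := by
  have hsign : Even (n.choose 2) := by
    obtain ⟨k, rfl⟩ := hn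
    have : 4 * k * (4 * k - 1) = 2 * (2 * (k * (4 * k - 1))) := by ring
    rw [Nat.choose_two_right, this, Nat.mul_div_cancel_left _ two_pos]
    exact even_two_mul _
  rw [volumeElement_eq_prod_map,
    prod_map_ι_mul_self (List.pairwise_ofFn.mpr fun i j hij => he hij.ne)]
  simp [List.prod_ofFn, hunit, hsign.neg_one_pow]

theorem ι_mul_volumeElement (he : Pairwise fun i j => Q.IsOrtho (e i) (e j))
    (hspan : Submodule.span R (Set.range e) = ⊤) (hn : Even n) (v : M) :
    ι Q v * volumeElement Q e = -(volumeElement Q e * ι Q v) := by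
  suffices (LinearMap.mulRight R (volumeElement Q e)).comp (ι Q) =
      -(LinearMap.mulLeft R (volumeElement Q e)).comp (ι Q) from LinearMap.congr_fun this v
  refine LinearMap.ext_on_range hspan fun i => ?_
  have hodd : Odd (n - 1) := Nat.Even.sub_odd i.pos hn odd_one
  simp only [LinearMap.comp_apply, LinearMap.neg_apply, LinearMap.mulRight_apply,
    LinearMap.mulLeft_apply]
  rw [volumeElement_eq_prod_map,
    ι_mul_prod_map_ι_of_mem (List.pairwise_ofFn.mpr fun i j hij => he hij.ne)
      (List.mem_ofFn.mpr ⟨i, rfl⟩), List.length_ofFn, hodd.neg_one_pow, neg_one_smul]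

end VolumeElement

theorem commute_of_forall_commute_ι {R M₁ M₂ A : Type*} [CommRing R] [AddCommGroup M₁]
    [AddCommGroup M₂] [Module R M₁] [Module R M₂] [Semiring A] [Algebra R A]
    {Q₁ : QuadraticForm R M₁} {Q₂ : QuadraticForm R M₂}
    (f : CliffordAlgebra Q₁ →ₐ[R] A) (g : CliffordAlgebra Q₂ →ₐ[R] A)
    (h : ∀ v w, Commute (f (ι Q₁ v)) (g (ι Q₂ w))) (x : CliffordAlgebra Q₁)
    (y : CliffordAlgebra Q₂) : Commute (f x) (g y) := by
  induction x using CliffordAlgebra.induction with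
  | algebraMap r => exact f.commutes r ▸ Algebra.commute_algebraMap_left r _
  | add a b ha hb => exact map_add f a b ▸ ha.add_left hb
  | mul a b ha hb => exact map_mul f a b ▸ ha.mul_left hb
  | ι v =>
    induction y using CliffordAlgebra.induction with
    | algebraMap r => exact g.commutes r ▸ Algebra.commute_algebraMap_right r _
    | add a b ha hb => exact map_add g a b ▸ ha.add_right hb
    | mul a b ha hb => exact map_mul g a b ▸ ha.mul_right hb
    | ι w => exact h v w

variable {R M₁ M₂ : Type*} [CommRing R] [AddCommGroup M₁] [AddCommGroup M₂] [Module R M₁]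
  [Module R M₂] (Q₁ : QuadraticForm R M₁) (Q₂ : QuadraticForm R M₂)

theorem map_inl_ι (v : M₁) :
    map (QuadraticMap.Isometry.inl Q₁ Q₂) (ι Q₁ v) = ι (Q₁.prod Q₂) (v, 0) :=
  map_apply_ι _ _

theorem map_inr_ι (w : M₂) :
    map (QuadraticMap.Isometry.inr Q₁ Q₂) (ι Q₂ w) = ι (Q₁.prod Q₂) (0, w) :=
  map_apply_ι _ _

section TensorEquiv

variable {Q₁ Q₂} {ε : CliffordAlgebra Q₁}

variable (Q₂) in
def prodToTensor (hε : ε * ε = 1) (hanti : ∀ v, ι Q₁ v * ε = -(ε * ι Q₁ v)) :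
    CliffordAlgebra (Q₁.prod Q₂) →ₐ[R] CliffordAlgebra Q₁ ⊗[R] CliffordAlgebra Q₂ :=
  lift _ ⟨Algebra.TensorProduct.includeLeft.toLinearMap ∘ₗ ι Q₁ ∘ₗ LinearMap.fst R M₁ M₂ +
      TensorProduct.mk R _ _ ε ∘ₗ ι Q₂ ∘ₗ LinearMap.snd R M₁ M₂, fun ⟨v, w⟩ => by
    simp only [LinearMap.add_apply, LinearMap.comp_apply, AlgHom.toLinearMap_apply,
      Algebra.TensorProduct.includeLeft_apply, LinearMap.fst_apply, LinearMap.snd_apply,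
      TensorProduct.mk_apply]
    rw [Algebra.TensorProduct.tmul_one_add_tmul_mul_self (hanti v), ι_sq_scalar, ι_sq_scalar, hε,
      QuadraticMap.prod_apply, map_add, Algebra.TensorProduct.algebraMap_apply,
      Algebra.TensorProduct.algebraMap_apply']⟩

theorem commute_map_inl_ι_inr (heven : ε ∈ evenOdd Q₁ 0) (w : M₂) :
    Commute (map (QuadraticMap.Isometry.inl Q₁ Q₂) ε) (ι _ (0, w)) :=
  map_inr_ι Q₁ Q₂ w ▸ commute_map_mul_map_of_isOrtho_of_mem_evenOdd_zero_left _ _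
    (fun _ _ => QuadraticMap.IsOrtho.inl_inr _ _) _ _ heven (ι_mem_evenOdd_one Q₂ w)

theorem ι_inl_mul_map_inl (hanti : ∀ v, ι Q₁ v * ε = -(ε * ι Q₁ v)) (v : M₁) :
    ι (Q₁.prod Q₂) (v, 0) * map (QuadraticMap.Isometry.inl Q₁ Q₂) ε =
      -(map (QuadraticMap.Isometry.inl Q₁ Q₂) ε * ι (Q₁.prod Q₂) (v, 0)) := by
  simpa only [map_mul, map_neg, map_inl_ι] using
    congrArg (map (QuadraticMap.Isometry.inl Q₁ Q₂)) (hanti v)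

variable (Q₂) in
def tensorToProd (hε : ε * ε = 1) (hanti : ∀ v, ι Q₁ v * ε = -(ε * ι Q₁ v))
    (heven : ε ∈ evenOdd Q₁ 0) :
    CliffordAlgebra Q₁ ⊗[R] CliffordAlgebra Q₂ →ₐ[R] CliffordAlgebra (Q₁.prod Q₂) :=
  let ε' := map (QuadraticMap.Isometry.inl Q₁ Q₂) ε
  Algebra.TensorProduct.lift (map (QuadraticMap.Isometry.inl Q₁ Q₂))
    (lift Q₂ ⟨LinearMap.mulLeft R ε' ∘ₗ ι _ ∘ₗ LinearMap.inr R M₁ M₂, fun w => by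
      simp only [LinearMap.comp_apply, LinearMap.inr_apply, LinearMap.mulLeft_apply]
      rw [(commute_map_inl_ι_inr heven w).symm.mul_mul_mul_comm, ← map_mul, hε, map_one, one_mul,
        ι_sq_scalar, QuadraticMap.prod_apply, map_zero, zero_add]⟩)
    (commute_of_forall_commute_ι _ _ fun v w => by
      rw [map_inl_ι, lift_ι_apply]
      simp only [LinearMap.comp_apply, LinearMap.inr_apply, LinearMap.mulLeft_apply]
      rw [commute_iff_eq, ← mul_assoc, ι_inl_mul_map_inl hanti, neg_mul, mul_assoc,
        ι_mul_ι_comm_of_isOrtho (QuadraticMap.IsOrtho.inl_inr v w), mul_neg, neg_neg, mul_assoc])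

variable {hε : ε * ε = 1} {hanti : ∀ v, ι Q₁ v * ε = -(ε * ι Q₁ v)} {heven : ε ∈ evenOdd Q₁ 0}

@[simp]
theorem prodToTensor_ι (v : M₁) (w : M₂) :
    prodToTensor Q₂ hε hanti (ι _ (v, w)) = ι Q₁ v ⊗ₜ 1 + ε ⊗ₜ ι Q₂ w := by
  rw [prodToTensor, lift_ι_apply]
  simp

@[simp]
theorem prodToTensor_map_inl (x : CliffordAlgebra Q₁) :
    prodToTensor Q₂ hε hanti (map (QuadraticMap.Isometry.inl Q₁ Q₂) x) = x ⊗ₜ 1 := by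
  have : (prodToTensor Q₂ hε hanti).comp (map (QuadraticMap.Isometry.inl Q₁ Q₂)) =
      Algebra.TensorProduct.includeLeft := by
    ext v
    simp
  exact AlgHom.congr_fun this x

theorem tensorToProd_tmul_one (x : CliffordAlgebra Q₁) :
    tensorToProd Q₂ hε hanti heven (x ⊗ₜ 1) = map (QuadraticMap.Isometry.inl Q₁ Q₂) x := by
  simp [tensorToProd]

theorem tensorToProd_tmul_ι (x : CliffordAlgebra Q₁) (w : M₂) :
    tensorToProd Q₂ hε hanti heven (x ⊗ₜ ι Q₂ w) =
      map (QuadraticMap.Isometry.inl Q₁ Q₂) (x * ε) * ι (Q₁.prod Q₂) (0, w) := by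
  simp [tensorToProd, mul_assoc]

theorem prodToTensor_comp_tensorToProd :
    (prodToTensor Q₂ hε hanti).comp (tensorToProd Q₂ hε hanti heven) = AlgHom.id _ _ := by
  ext v <;> simp [tensorToProd, hε]

theorem tensorToProd_comp_prodToTensor :
    (tensorToProd Q₂ hε hanti heven).comp (prodToTensor Q₂ hε hanti) = AlgHom.id _ _ := by
  refine hom_ext <| LinearMap.ext fun ⟨v, w⟩ => ?_
  change tensorToProd Q₂ hε hanti heven (prodToTensor Q₂ hε hanti (ι _ (v, w))) = ι _ (v, w)
  rw [prodToTensor_ι, map_add, tensorToProd_tmul_one, tensorToProd_tmul_ι, hε, map_one, one_mul,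
    map_inl_ι, ← map_add, Prod.mk_add_mk, add_zero, zero_add]

variable (Q₂) in
def prodEquivTensor (hε : ε * ε = 1) (hanti : ∀ v, ι Q₁ v * ε = -(ε * ι Q₁ v))
    (heven : ε ∈ evenOdd Q₁ 0) :
    CliffordAlgebra (Q₁.prod Q₂) ≃ₐ[R] CliffordAlgebra Q₁ ⊗[R] CliffordAlgebra Q₂ :=
  AlgEquiv.ofAlgHom (prodToTensor Q₂ hε hanti) (tensorToProd Q₂ hε hanti heven)
    prodToTensor_comp_tensorToProd tensorToProd_comp_prodToTensor

@[simp]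
theorem prodEquivTensor_ι (v : M₁) (w : M₂) :
    prodEquivTensor Q₂ hε hanti heven (ι _ (v, w)) = ι Q₁ v ⊗ₜ 1 + ε ⊗ₜ ι Q₂ w :=
  prodToTensor_ι (hε := hε) (hanti := hanti) v w

end TensorEquiv

end CliffordAlgebra

theorem stmt5_general (V : Type) [NormedAddCommGroup V] [InnerProductSpace ℝ V]
    {n : ℕ} (h4 : n % 4 = 0)
    (e : OrthonormalBasis (Fin n) ℝ V)
    (Q : QuadraticForm ℝ V) (hQ : ∀ v, Q v = inner ℝ v v)
    (W : Type) [AddCommGroup W] [Module ℝ W]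
    (Q' : QuadraticForm ℝ W)
    (ε : CliffordAlgebra Q) (hε : ε = (List.ofFn fun i : Fin n => ι Q (e i)).prod) :
    ∃ f : CliffordAlgebra (Q.prod Q') ≃ₐ[ℝ] CliffordAlgebra Q ⊗[ℝ] CliffordAlgebra Q',
      ∀ (v : V) (w : W),
        f (ι (Q.prod Q') (v, w)) = ι Q v ⊗ₜ[ℝ] (1 : CliffordAlgebra Q') + ε ⊗ₜ[ℝ] ι Q' w := by
  have hortho : Pairwise fun i j => Q.IsOrtho (e i) (e j) := fun i j hij =>
    QuadraticMap.isOrtho_def.mpr <| by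
      rw [hQ, hQ, hQ, inner_add_add_self, e.orthonormal.2 hij, e.orthonormal.2 hij.symm,
        add_zero, add_zero]
  have hunit (i : Fin n) : Q (e i) = 1 := by
    rw [hQ, real_inner_self_eq_norm_sq, e.orthonormal.1 i, one_pow]
  have hspan : Submodule.span ℝ (Set.range e) = ⊤ := by
    simpa using e.toBasis.span_eq
  have h4' : 4 ∣ n := Nat.dvd_of_mod_eq_zero h4
  have heven : Even n := even_iff_two_dvd.mpr ((by norm_num : 2 ∣ 4).trans h4')
  subst hε
  exact ⟨prodEquivTensor Q' (volumeElement_mul_self hortho hunit h4')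
    (ι_mul_volumeElement hortho hspan heven) (volumeElement_mem_evenOdd_zero heven),
    prodEquivTensor_ι⟩

/-- for `V` a `4k`-dimensional real inner product space and `(W, Q')` a
finite-dimensional real quadratic space, the map `(v, w) ↦ ι v ⊗ 1 + ε ⊗ ι w` induces an
algebra isomorphism `C(V ⊕ W, Q ⊥ Q') ≅ C(V) ⊗ C(W)` (ungraded tensor product). -/
theorem stmt5 (V : Type) [NormedAddCommGroup V] [InnerProductSpace ℝ V]
    [FiniteDimensional ℝ V] {n : ℕ} (hn : n = Module.finrank ℝ V) (h4 : n % 4 = 0)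
    (e : OrthonormalBasis (Fin n) ℝ V)
    (Q : QuadraticForm ℝ V) (hQ : ∀ v, Q v = inner ℝ v v)
    (W : Type) [AddCommGroup W] [Module ℝ W] [Module.Finite ℝ W]
    (Q' : QuadraticForm ℝ W)
    (ε : CliffordAlgebra Q) (hε : ε = (List.ofFn fun i : Fin n => ι Q (e i)).prod) :
    ∃ f : CliffordAlgebra (Q.prod Q') ≃ₐ[ℝ] CliffordAlgebra Q ⊗[ℝ] CliffordAlgebra Q',
      ∀ (v : V) (w : W),
        f (ι (Q.prod Q') (v, w)) = ι Q v ⊗ₜ[ℝ] (1 : CliffordAlgebra Q') + ε ⊗ₜ[ℝ] ι Q' w :=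
  stmt5_general V h4 e Q hQ W Q' ε hε
end

section
/- Let A be an ℝ-algebra with a ℤ/2-grading A = A⁰ ⊕ A¹ and suppose there exists an even element ε ∈ A⁰ with ε² = 1 that commutes with A⁰ and anticommutes with A¹ (for instance ε = e₁⋯eₙ in a Clifford algebra of rank divisible by 4). Then for any ℤ/2-graded ℝ-algebra B, the graded tensor product A ⊗̂ B is isomorphic as an algebra to the ungraded tensor product A ⊗ B. -/
/-!
Right multiplication by `ε^{|b|}` in the first factor, `a ⊗ b ↦ a ε^{|b|} ⊗ b`, turns the graded
sign rule into the ungraded one: moving `ε^{|b|}` past a homogeneous `a'` produces exactly the sign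
`(-1)^{|b||a'|}`, so `a ᵍ⊗ b ↦ a ε^{|b|} ⊗ b` is an algebra map out of `A ⊗̂ B` by the universal
property. As a linear map it is this twist of `A ⊗ B`, which is an involution because `ε² = 1`.
-/

open scoped TensorProduct
open DirectSum

noncomputable section

variable {R A B : Type*} [CommRing R] [Ring A] [Ring B] [Algebra R A] [Algebra R B]

def parityPow (ε : A) (j : ZMod 2) : A := ε ^ j.val

@[simp]
lemma parityPow_zero (ε : A) : parityPow ε 0 = 1 := pow_zero ε

@[simp]
lemma parityPow_one (ε : A) : parityPow ε 1 = ε := pow_one ε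

lemma parityPow_add {ε : A} (hε2 : ε * ε = 1) (i j : ZMod 2) :
    parityPow ε (i + j) = parityPow ε i * parityPow ε j := by
  rw [parityPow, parityPow, parityPow, ← pow_add, ZMod.val_add,
    ← pow_eq_pow_mod _ (by rwa [sq])]

lemma mul_parityPow_of_mem (𝒜 : ZMod 2 → Submodule R A) {ε : A} (hcomm : ∀ a ∈ 𝒜 0, ε * a = a * ε)
    (hanti : ∀ a ∈ 𝒜 1, ε * a = -(a * ε)) {i : ZMod 2} {a : A} (ha : a ∈ 𝒜 i) (j : ZMod 2) :
    a * parityPow ε j = (-1 : ℤˣ) ^ (j * i) • (parityPow ε j * a) := by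
  have zmod_two : ∀ k : ZMod 2, k = 0 ∨ k = 1 := by decide
  obtain rfl | rfl := zmod_two j
  · simp
  obtain rfl | rfl := zmod_two i
  · simp [hcomm a ha]
  · simp [hanti a ha]

variable (𝒜 : ZMod 2 → Submodule R A) (ℬ : ZMod 2 → Submodule R B)
  [GradedAlgebra 𝒜] [GradedAlgebra ℬ] (ε : A)

def includeRightTwistedₗ : B →ₗ[R] A ⊗[R] B :=
  (toModule R (ZMod 2) (A ⊗[R] B) fun j =>
      (TensorProduct.mk R A B (parityPow ε j)).comp (ℬ j).subtype)
    ∘ₗ (decomposeLinearEquiv ℬ).toLinearMap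

variable {ε}

lemma includeRightTwistedₗ_apply_coe {j : ZMod 2} (b : ℬ j) :
    includeRightTwistedₗ ℬ ε b = parityPow ε j ⊗ₜ[R] (b : B) := by
  rw [includeRightTwistedₗ, LinearMap.comp_apply, LinearEquiv.coe_coe,
    decomposeLinearEquiv_apply, decompose_coe, ← lof_eq_of R, toModule_lof]
  rfl

def includeRightTwisted (hε2 : ε * ε = 1) : B →ₐ[R] A ⊗[R] B :=
  AlgHom.ofLinearMap (includeRightTwistedₗ ℬ ε)
    (by
      rw [← SetLike.coe_gOne ℬ, includeRightTwistedₗ_apply_coe, parityPow_zero,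
        SetLike.coe_gOne, Algebra.TensorProduct.one_def])
    (by
      rw [LinearMap.map_mul_iff]
      refine decompose_lhom_ext ℬ fun i => LinearMap.ext fun b₁ => ?_
      refine decompose_lhom_ext ℬ fun j => LinearMap.ext fun b₂ => ?_
      dsimp only [LinearMap.comp_apply, Submodule.subtype_apply, LinearMap.compl₂_apply,
        LinearMap.compr₂_apply, LinearMap.mul_apply', LinearMap.flip_apply]
      rw [← SetLike.coe_gMul, includeRightTwistedₗ_apply_coe, includeRightTwistedₗ_apply_coe,
        includeRightTwistedₗ_apply_coe, Algebra.TensorProduct.tmul_mul_tmul, parityPow_add hε2,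
        SetLike.coe_gMul])

variable (ε)

def tensorTwist : A ⊗[R] B →ₗ[R] A ⊗[R] B :=
  LinearMap.mul' R (A ⊗[R] B) ∘ₗ
    TensorProduct.map Algebra.TensorProduct.includeLeft.toLinearMap (includeRightTwistedₗ ℬ ε)

variable {ε}

lemma tensorTwist_tmul_coe (a : A) {j : ZMod 2} (b : ℬ j) :
    tensorTwist ℬ ε (a ⊗ₜ[R] (b : B)) = (a * parityPow ε j) ⊗ₜ[R] (b : B) := by
  rw [tensorTwist, LinearMap.comp_apply, TensorProduct.map_tmul, LinearMap.mul'_apply,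
    includeRightTwistedₗ_apply_coe, AlgHom.toLinearMap_apply,
    Algebra.TensorProduct.includeLeft_apply, Algebra.TensorProduct.tmul_mul_tmul, one_mul]

lemma tensorTwist_involutive (hε2 : ε * ε = 1) :
    Function.Involutive (tensorTwist (A := A) ℬ ε) := by
  suffices tensorTwist ℬ ε ∘ₗ tensorTwist ℬ ε = LinearMap.id from LinearMap.congr_fun this
  refine TensorProduct.ext (LinearMap.ext fun a => ?_)
  refine decompose_lhom_ext ℬ fun j => LinearMap.ext fun b => ?_
  dsimp only [LinearMap.comp_apply, Submodule.subtype_apply, TensorProduct.mk_apply,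
    LinearMap.compr₂_apply, LinearMap.compr₂ₛₗ_apply, LinearMap.id_apply]
  rw [tensorTwist_tmul_coe, tensorTwist_tmul_coe, mul_assoc, ← parityPow_add hε2,
    CharTwo.add_self_eq_zero, parityPow_zero, mul_one]

def gradedTensorTwist (hε2 : ε * ε = 1) (hcomm : ∀ a ∈ 𝒜 0, ε * a = a * ε)
    (hanti : ∀ a ∈ 𝒜 1, ε * a = -(a * ε)) : (𝒜 ᵍ⊗[R] ℬ) →ₐ[R] A ⊗[R] B :=
  GradedTensorProduct.lift 𝒜 ℬ Algebra.TensorProduct.includeLeft (includeRightTwisted ℬ hε2)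
    fun _ j a b => by
      rw [Algebra.TensorProduct.includeLeft_apply, includeRightTwisted, AlgHom.ofLinearMap_apply,
        includeRightTwistedₗ_apply_coe, Algebra.TensorProduct.tmul_mul_tmul,
        Algebra.TensorProduct.tmul_mul_tmul, one_mul, mul_one,
        mul_parityPow_of_mem 𝒜 hcomm hanti a.2 j, Units.smul_def, Units.smul_def,
        ← TensorProduct.smul_tmul']

lemma gradedTensorTwist_bijective (hε2 : ε * ε = 1) (hcomm : ∀ a ∈ 𝒜 0, ε * a = a * ε)
    (hanti : ∀ a ∈ 𝒜 1, ε * a = -(a * ε)) :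
    Function.Bijective (gradedTensorTwist 𝒜 ℬ hε2 hcomm hanti) :=
  (tensorTwist_involutive ℬ hε2).bijective.comp (GradedTensorProduct.of R 𝒜 ℬ).symm.bijective

end

theorem stmt19_general (A B : Type) [Ring A] [Ring B] [Algebra ℝ A] [Algebra ℝ B]
    (𝒜 : ZMod 2 → Submodule ℝ A) (ℬ : ZMod 2 → Submodule ℝ B)
    [GradedAlgebra 𝒜] [GradedAlgebra ℬ]
    (ε : A) (hε2 : ε * ε = 1)
    (hcomm : ∀ a ∈ 𝒜 0, ε * a = a * ε)
    (hanti : ∀ a ∈ 𝒜 1, ε * a = -(a * ε)) :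
    Nonempty ((𝒜 ᵍ⊗[ℝ] ℬ) ≃ₐ[ℝ] A ⊗[ℝ] B) :=
  ⟨AlgEquiv.ofBijective _ (gradedTensorTwist_bijective 𝒜 ℬ hε2 hcomm hanti)⟩

/-- if a ℤ/2-graded ℝ-algebra `A` has an even element `ε` with `ε² = 1`,
commuting with the even part and anticommuting with the odd part, then for any ℤ/2-graded
ℝ-algebra `B` the graded tensor product `A ⊗̂ B` is isomorphic as an ℝ-algebra to the
ungraded tensor product `A ⊗ B`. -/
theorem stmt19 (A B : Type) [Ring A] [Ring B] [Algebra ℝ A] [Algebra ℝ B]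
    (𝒜 : ZMod 2 → Submodule ℝ A) (ℬ : ZMod 2 → Submodule ℝ B)
    [GradedAlgebra 𝒜] [GradedAlgebra ℬ]
    (ε : A) (hε0 : ε ∈ 𝒜 0) (hε2 : ε * ε = 1)
    (hcomm : ∀ a ∈ 𝒜 0, ε * a = a * ε)
    (hanti : ∀ a ∈ 𝒜 1, ε * a = -(a * ε)) :
    Nonempty ((𝒜 ᵍ⊗[ℝ] ℬ) ≃ₐ[ℝ] A ⊗[ℝ] B) :=
  stmt19_general A B 𝒜 ℬ ε hε2 hcomm hanti
end
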